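/- arXiv:2109.07114 — 2 statements merged into one kernel-verified Lean document; each statement's English description precedes it below -/
import Mathlib

section
/- Let 1 < α < 2 and λ ≥ λ₁ > 0, t > 0, and suppose |F(t,λ)| ≤ c/(1+λt^α) and |F̄(t,λ)| ≤ ct/(1+λt^α) (bounds satisfied by E_{α,1}(−λt^α) and tE_{α,2}(−λt^α)), and that the regularized inverse multiplier satisfies the bound M(λ) ≤ cλ/(1+γλ). Then for any p, q with 0 ≤ p ≤ q ≤ 2+p, λ^{p/2} · (c/(1+λt^α)) · (cλ/(1+γλ)) · λ^{-q/2} ≤ c' min(γ^{-(1+(p−q)/2)}, t^{-α(1+(p−q)/2)}). -/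
/-!
Write `θ = 1 + (p - q)/2 ∈ [0, 1]`; the left-hand side is `c² λ^θ / ((1 + λ t^α)(1 + γ λ))`.
For `X > 0` and `0 ≤ θ ≤ 1` one has `(λX)^θ ≤ 1 + λX`, i.e. `λ^θ ≤ (1 + λX) X^{-θ}`. Since the
denominator dominates both `1 + λ γ` and `1 + λ t^α`, taking `X = γ` and `X = t^α` gives the two
halves of the minimum.
-/

open Real

lemma Real.rpow_le_one_add {y e : ℝ} (hy : 0 ≤ y) (he₀ : 0 ≤ e) (he₁ : e ≤ 1) :
    y ^ e ≤ 1 + y := by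
  rcases le_total y 1 with h | h
  · linarith [rpow_le_one hy h he₀]
  · linarith [rpow_le_self_of_one_le h he₁]

lemma Real.rpow_div_le_rpow_neg {lam X θ D : ℝ} (hlam : 0 ≤ lam) (hX : 0 < X)
    (hθ₀ : 0 ≤ θ) (hθ₁ : θ ≤ 1) (hD : 1 + lam * X ≤ D) :
    lam ^ θ / D ≤ X ^ (-θ) := by
  have hD₀ : 0 < D := by nlinarith [mul_nonneg hlam hX.le]
  rw [div_le_iff₀ hD₀]
  calc lam ^ θ = (lam * X) ^ θ * X ^ (-θ) := by
        rw [mul_rpow hlam hX.le, mul_assoc, ← rpow_add hX, add_neg_cancel, rpow_zero, mul_one]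
    _ ≤ (1 + lam * X) * X ^ (-θ) := by
        gcongr
        exact rpow_le_one_add (by positivity) hθ₀ hθ₁
    _ ≤ X ^ (-θ) * D := by
        rw [mul_comm]
        gcongr

lemma Real.rpow_div_one_add_mul_one_add_le_min {lam a γ θ : ℝ} (hlam : 0 < lam) (ha : 0 < a)
    (hγ : 0 < γ) (hθ₀ : 0 ≤ θ) (hθ₁ : θ ≤ 1) :
    lam ^ θ / ((1 + lam * a) * (1 + γ * lam)) ≤ min (γ ^ (-θ)) (a ^ (-θ)) := by
  have hla : 0 < lam * a := mul_pos hlam ha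
  have hγl : 0 < γ * lam := mul_pos hγ hlam
  refine le_min (rpow_div_le_rpow_neg hlam.le hγ hθ₀ hθ₁ ?_)
    (rpow_div_le_rpow_neg hlam.le ha hθ₀ hθ₁ ?_) <;> nlinarith [mul_pos hla hγl]

theorem regularized_operator_multiplier_bound_general
    (α lam₁ T c : ℝ) (hlam₁ : 0 < lam₁)
    (hc : 0 < c) :
    ∃ c' : ℝ, 0 < c' ∧ ∀ p q γ t lam : ℝ, 0 ≤ p → p ≤ q → q ≤ 2 + p → 0 < γ →
      0 < t → t ≤ T → lam₁ ≤ lam →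
      lam ^ (p / 2) * (c / (1 + lam * t ^ α)) * (c * lam / (1 + γ * lam)) * lam ^ (-(q / 2)) ≤
        c' * min (γ ^ (-(1 + (p - q) / 2))) (t ^ (-(α * (1 + (p - q) / 2)))) := by
  refine ⟨c * c, mul_pos hc hc, fun p q γ t lam _ hpq hq hγ ht _ hlam => ?_⟩
  have hlam₀ : 0 < lam := hlam₁.trans_le hlam
  set θ : ℝ := 1 + (p - q) / 2 with hθ_def
  have hθ₀ : 0 ≤ θ := by linarith
  have hθ₁ : θ ≤ 1 := by linarith
  have hpow : lam ^ (p / 2) * lam ^ (-(q / 2)) * lam = lam ^ θ := by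
    rw [← rpow_add hlam₀, ← rpow_add_one hlam₀.ne', hθ_def]
    ring_nf
  have hlhs : lam ^ (p / 2) * (c / (1 + lam * t ^ α)) * (c * lam / (1 + γ * lam)) *
      lam ^ (-(q / 2)) = c * c * (lam ^ θ / ((1 + lam * t ^ α) * (1 + γ * lam))) := by
    rw [← hpow]
    field_simp
  rw [hlhs, neg_mul_eq_mul_neg, rpow_mul ht.le]
  gcongr
  exact rpow_div_one_add_mul_one_add_le_min hlam₀ (rpow_pos_of_pos ht α) hγ hθ₀ hθ₁

/-- Pointwise-in-`λ` estimate at the heart of Lemma 3.5: combining the Mittag-Leffler decay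
`1/(1+λt^α)` with the regularized-inverse growth `λ/(1+γλ)` yields, after shifting by
`λ^{(p−q)/2}`, the bound `c' min(γ^{-(1+(p−q)/2)}, t^{-α(1+(p−q)/2)})`, uniformly in
`λ ≥ λ₁ > 0`, `γ > 0`, `t ∈ (0,T]`, `0 ≤ p ≤ q ≤ 2+p`. -/
theorem regularized_operator_multiplier_bound
    (α lam₁ T c : ℝ) (hα1 : 1 < α) (hα2 : α < 2) (hlam₁ : 0 < lam₁) (hT : 0 < T)
    (hc : 0 < c) :
    ∃ c' : ℝ, 0 < c' ∧ ∀ p q γ t lam : ℝ, 0 ≤ p → p ≤ q → q ≤ 2 + p → 0 < γ →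
      0 < t → t ≤ T → lam₁ ≤ lam →
      lam ^ (p / 2) * (c / (1 + lam * t ^ α)) * (c * lam / (1 + γ * lam)) * lam ^ (-(q / 2)) ≤
        c' * min (γ ^ (-(1 + (p - q) / 2))) (t ^ (-(α * (1 + (p - q) / 2)))) :=
  regularized_operator_multiplier_bound_general α lam₁ T c hlam₁ hc
end

section
/- For α ∈ (1,2) and constants c, θ with cos θ < 0, the contour tail integral satisfies: for all n ≥ 1 and t_n = nτ, ∫_{π/(τ sinθ)}^∞ e^{ρ cosθ · t_n} ρ^{α−2} dρ ≤ C t_n^{1−α} n^{-1}, where C depends only on α and θ. -/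
open Real MeasureTheory Set

lemma integrableOn_rpow_sub_one_mul_exp_neg_mul {s r : ℝ} (hs : 0 < s) (hr : 0 < r) :
    IntegrableOn (fun t : ℝ => t ^ (s - 1) * exp (-(r * t))) (Ioi 0) :=
  .of_integral_ne_zero <| by rw [integral_rpow_mul_exp_neg_mul_Ioi hs hr]; positivity

lemma rpow_sub_two_le_inv_mul_rpow_sub_one {a s t : ℝ} (ha : 0 < a) (hat : a ≤ t) :
    t ^ (s - 2) ≤ a⁻¹ * t ^ (s - 1) := by
  have ht : 0 < t := ha.trans_le hat
  calc t ^ (s - 2) = t⁻¹ * t ^ (s - 1) := by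
        rw [← rpow_neg_one, ← rpow_add ht]; ring_nf
    _ ≤ a⁻¹ * t ^ (s - 1) := by gcongr

/-- Bounding `t ^ (s - 2)` by `a⁻¹ * t ^ (s - 1)` on the tail reduces it to a Gamma integral. -/
theorem setIntegral_Ioi_exp_neg_mul_mul_rpow_sub_two_le {a r s : ℝ} (ha : 0 < a) (hr : 0 < r)
    (hs : 0 < s) :
    ∫ t in Ioi a, exp (-(r * t)) * t ^ (s - 2) ≤ a⁻¹ * ((1 / r) ^ s * Gamma s) := by
  have hg := integrableOn_rpow_sub_one_mul_exp_neg_mul hs hr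
  have hg_tail := (hg.mono_set (Ioi_subset_Ioi ha.le)).const_mul a⁻¹
  have hpt : ∀ t ∈ Ioi a,
      exp (-(r * t)) * t ^ (s - 2) ≤ a⁻¹ * (t ^ (s - 1) * exp (-(r * t))) := fun t ht => by
    calc exp (-(r * t)) * t ^ (s - 2) ≤ exp (-(r * t)) * (a⁻¹ * t ^ (s - 1)) := by
          gcongr; exact rpow_sub_two_le_inv_mul_rpow_sub_one ha (le_of_lt ht)
      _ = a⁻¹ * (t ^ (s - 1) * exp (-(r * t))) := by ring
  have hf : IntegrableOn (fun t => exp (-(r * t)) * t ^ (s - 2)) (Ioi a) := by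
    refine hg_tail.mono' (by fun_prop) ?_
    filter_upwards [ae_restrict_mem measurableSet_Ioi] with t ht
    have : 0 < t := ha.trans ht
    rw [norm_of_nonneg (by positivity)]
    exact hpt t ht
  calc ∫ t in Ioi a, exp (-(r * t)) * t ^ (s - 2)
      ≤ ∫ t in Ioi a, a⁻¹ * (t ^ (s - 1) * exp (-(r * t))) :=
        setIntegral_mono_on hf hg_tail measurableSet_Ioi hpt
    _ ≤ a⁻¹ * ∫ t in Ioi 0, t ^ (s - 1) * exp (-(r * t)) := by
        rw [integral_const_mul]
        refine mul_le_mul_of_nonneg_left (setIntegral_mono_set hg ?_ ?_) (by positivity)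
        · filter_upwards [ae_restrict_mem measurableSet_Ioi] with t (ht : 0 < t)
          positivity
        · exact .of_forall (Ioi_subset_Ioi ha.le)
    _ = a⁻¹ * ((1 / r) ^ s * Gamma s) := by rw [integral_rpow_mul_exp_neg_mul_Ioi hs hr]

theorem contour_tail_estimate_general (α θ : ℝ) (hα1 : 1 < α)
    (hcos : Real.cos θ < 0) (hsin : 0 < Real.sin θ) :
    ∃ C : ℝ, 0 < C ∧ ∀ τ : ℝ, 0 < τ → ∀ n : ℕ, 1 ≤ n →
      (∫ ρ in Set.Ioi (π / (τ * Real.sin θ)),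
          Real.exp (ρ * Real.cos θ * (n * τ)) * ρ ^ (α - 2)) ≤
        C * ((n : ℝ) * τ) ^ (1 - α) * (n : ℝ)⁻¹ := by
  have hα : 0 < α := by linarith
  have hC : 0 < Gamma α * sin θ * (-cos θ) ^ (-α) / π :=
    div_pos (mul_pos (mul_pos (Gamma_pos_of_pos hα) hsin) (rpow_pos_of_pos (by linarith) _)) pi_pos
  refine ⟨_, hC, fun τ hτ n hn => ?_⟩
  have hn0 : (0 : ℝ) < n := by exact_mod_cast hn
  have ht : 0 < (n : ℝ) * τ := by positivity
  have hr : 0 < -cos θ * (n * τ) := by nlinarith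
  simp_rw [show ∀ ρ : ℝ, ρ * cos θ * (n * τ) = -((-cos θ * (n * τ)) * ρ) from fun ρ => by ring]
  refine (setIntegral_Ioi_exp_neg_mul_mul_rpow_sub_two_le (by positivity) hr hα).trans_eq ?_
  -- The `τ` in `(π / (τ sin θ))⁻¹` cancels against `(nτ)⁻¹`, leaving the factor `n⁻¹`.
  have hpow : (1 / (-cos θ * (n * τ))) ^ α
      = (-cos θ) ^ (-α) * ((n : ℝ) * τ) ^ (1 - α) * ((n : ℝ) * τ)⁻¹ := by
    rw [one_div, inv_rpow hr.le, ← rpow_neg hr.le, mul_rpow (by linarith) ht.le, sub_eq_add_neg,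
      rpow_add ht, rpow_one]
    field_simp
  rw [hpow, inv_div]
  field_simp

/-- Contour tail estimate: for `α ∈ (1,2)` and an angle `θ` with `cos θ < 0 < sin θ`,
there is `C > 0` (depending only on `α, θ`) such that for all `τ > 0`, `n ≥ 1`, with
`t_n = nτ`:
`∫_{π/(τ sinθ)}^∞ e^{ρ cosθ · t_n} ρ^{α−2} dρ ≤ C t_n^{1−α} n⁻¹`. -/
theorem contour_tail_estimate (α θ : ℝ) (hα1 : 1 < α) (hα2 : α < 2)
    (hcos : Real.cos θ < 0) (hsin : 0 < Real.sin θ) :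
    ∃ C : ℝ, 0 < C ∧ ∀ τ : ℝ, 0 < τ → ∀ n : ℕ, 1 ≤ n →
      (∫ ρ in Set.Ioi (π / (τ * Real.sin θ)),
          Real.exp (ρ * Real.cos θ * (n * τ)) * ρ ^ (α - 2)) ≤
        C * ((n : ℝ) * τ) ^ (1 - α) * (n : ℝ)⁻¹ :=
  contour_tail_estimate_general α θ hα1 hcos hsin
end
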